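/- For f(a,b,c,d) = a+b+c+d, the action e₁^τ as above, and φ₁(x) = (a+d)/(ab), ε₁(x) = (a+d)/(cd), one has the identity f(e₁^τ(x)) = f(x) + (τ-1)/φ₁(x) + (τ⁻¹-1)/ε₁(x). -/
import Mathlib

def e1 {F : Type*} [Field F] (τ : F) (p : F × F × F × F) : F × F × F × F :=
  let (a, b, c, d) := p
  (τ * a * (a + d) / (τ * a + d), b * (τ * a + d) / (a + d),
   τ⁻¹ * c * (τ * a + d) / (a + d), d * (a + d) / (τ * a + d))

def fsum {F : Type*} [Field F] (p : F × F × F × F) : F :=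
  p.1 + p.2.1 + p.2.2.1 + p.2.2.2

/-- f(e₁^τ x) = f(x) + (τ-1)/φ₁(x) + (τ⁻¹-1)/ε₁(x). -/
theorem f_e1 {F : Type*} [Field F] (τ a b c d : F)
    (hτ : τ ≠ 0) (ha : a ≠ 0) (hb : b ≠ 0) (hc : c ≠ 0) (hd : d ≠ 0)
    (had : a + d ≠ 0) (hτad : τ * a + d ≠ 0) :
    fsum (e1 τ (a, b, c, d)) =
      fsum (a, b, c, d) + (τ - 1) / ((a + d) / (a * b))
        + (τ⁻¹ - 1) / ((a + d) / (c * d)) := by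
  simp only [e1, fsum]
  field_simp
  ring
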